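/- Let ν be a compactly supported Borel probability measure on ℝ such that ∫ y^{k−1} dν(y) = c_k for every k ≥ 1, and let A_t be the unique ℝ-linear operator on ℝ[X] with A_t(1) = 0 and A_t∘F − F∘A_t = H_t. Then for every polynomial p ∈ ℝ[X] and every x ∈ ℝ, A_t(p)(x) = ((1+ηx+σx²)/(1+σt))·∫ r_p(x,y) dν(y), where r_p is the two-variable polynomial determined by the identity p(y) − p(x) − (y−x)·p′(x) = (y−x)²·r_p(x,y). -/

import Mathlib

/-!
Write `Δₐ p` for the divided difference `(p(y) - p(a)) / (y - a)`, a polynomial in `y`. Applying it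
twice gives `r_p(a, ·) = Δₐ² p`, and `Δₐ (X q) = q + a Δₐ q`. Hence `p ↦ h(a) ∫ Δₐ² p dν`, with
`h` the weight polynomial of `H`, obeys the recursion `A (X q) = X A q + H q` evaluated at `a`: the
moment condition identifies `H (Xⁿ)(a)` with `h(a) ∫ Δₐ Xⁿ dν`. Both sides vanish at `1` and are
linear, so they agree on all of `ℝ[X]`.
-/

open Polynomial Finset MeasureTheory

/-- The operator of multiplication by `X` on `ℝ[X]`. -/
noncomputable def F : Module.End ℝ (Polynomial ℝ) := LinearMap.mulLeft ℝ (X : Polynomial ℝ)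

section DivDiff

variable {R : Type*} [CommRing R]

theorem X_sub_C_mul_divByMonic_sub_C_eval (a : R) (p : R[X]) :
    (X - C a) * ((p - C (p.eval a)) /ₘ (X - C a)) = p - C (p.eval a) :=
  mul_divByMonic_eq_iff_isRoot.mpr (by simp)

theorem X_sub_C_mul_left_injective (a : R) : Function.Injective ((X - C a) * · : R[X] → R[X]) :=
  (monic_X_sub_C a).isRegular.left

noncomputable def divDiff (a : R) : R[X] →ₗ[R] R[X] where
  toFun p := (p - C (p.eval a)) /ₘ (X - C a)
  map_add' p q := X_sub_C_mul_left_injective a <| by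
    dsimp only
    rw [mul_add, X_sub_C_mul_divByMonic_sub_C_eval, X_sub_C_mul_divByMonic_sub_C_eval,
      X_sub_C_mul_divByMonic_sub_C_eval, eval_add, C_add]
    ring
  map_smul' b p := X_sub_C_mul_left_injective a <| by
    dsimp only
    rw [mul_smul_comm, X_sub_C_mul_divByMonic_sub_C_eval, X_sub_C_mul_divByMonic_sub_C_eval]
    simp [smul_sub, smul_eq_C_mul, C_mul]

theorem X_sub_C_mul_divDiff (a : R) (p : R[X]) :
    (X - C a) * divDiff a p = p - C (p.eval a) :=
  X_sub_C_mul_divByMonic_sub_C_eval a p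

theorem divDiff_eq_of_X_sub_C_mul {a : R} {p q : R[X]} (h : (X - C a) * q = p - C (p.eval a)) :
    divDiff a p = q :=
  X_sub_C_mul_left_injective a <| (X_sub_C_mul_divDiff a p).trans h.symm

theorem divDiff_one (a : R) : divDiff a (1 : R[X]) = 0 :=
  divDiff_eq_of_X_sub_C_mul (by simp)

theorem divDiff_X_mul (a : R) (q : R[X]) : divDiff a (X * q) = q + a • divDiff a q :=
  divDiff_eq_of_X_sub_C_mul <| by
    rw [mul_add, mul_smul_comm, X_sub_C_mul_divDiff, smul_eq_C_mul, eval_mul, eval_X, C_mul]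
    ring

theorem eval_divDiff_self (a : R) (p : R[X]) : (divDiff a p).eval a = (derivative p).eval a := by
  have h := congrArg (fun q => (derivative q).eval a) (X_sub_C_mul_divDiff a p)
  simpa [derivative_mul] using h

theorem eval_sub_eval_sub_mul_derivative (a b : R) (p : R[X]) :
    p.eval b - p.eval a - (b - a) * (derivative p).eval a =
      (b - a) ^ 2 * (divDiff a (divDiff a p)).eval b := by
  have h₁ := congrArg (eval b) (X_sub_C_mul_divDiff a p)
  have h₂ := congrArg (eval b) (X_sub_C_mul_divDiff a (divDiff a p))
  simp only [eval_mul, eval_sub, eval_X, eval_C, eval_divDiff_self] at h₁ h₂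
  linear_combination -h₁ - (b - a) * h₂

end DivDiff

section Generator

variable {R : Type*} [CommRing R] {A H : Module.End R R[X]} {h : R[X]} {c : ℕ → R}
  {L : R[X] →ₗ[R] R}

theorem apply_divDiff_X_pow (hL : ∀ j, L (X ^ j) = c (j + 1)) (a : R) (n : ℕ) :
    L (divDiff a (X ^ n)) = ∑ k ∈ Icc 1 n, c k * a ^ (n - k) := by
  induction n with
  | zero => simp [divDiff_one]
  | succ n ih =>
    rw [pow_succ', divDiff_X_mul, map_add, map_smul, ih, hL, sum_Icc_succ_top (by omega),
      smul_eq_mul, mul_sum, Nat.sub_self, pow_zero, mul_one, add_comm]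
    congr 1
    refine sum_congr rfl fun k hk => ?_
    rw [Nat.sub_add_comm (mem_Icc.mp hk).2, pow_succ]
    ring

theorem eval_apply_eq_mul_apply_divDiff_divDiff (hA1 : A 1 = 0)
    (hAX : ∀ q, A (X * q) = X * A q + H q)
    (hH : ∀ n, H (X ^ n) = h * ∑ k ∈ Icc 1 n, C (c k) * X ^ (n - k))
    (hL : ∀ j, L (X ^ j) = c (j + 1)) (a : R) (p : R[X]) :
    (A p).eval a = h.eval a * L (divDiff a (divDiff a p)) := by
  have hX_pow (n : ℕ) : (A (X ^ n)).eval a = h.eval a * L (divDiff a (divDiff a (X ^ n))) := by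
    induction n with
    | zero => simp [hA1, divDiff_one]
    | succ n ih =>
      rw [pow_succ', hAX, eval_add, eval_mul, eval_X, ih, hH, divDiff_X_mul, map_add, map_smul,
        map_add, map_smul, apply_divDiff_X_pow hL]
      simp only [eval_mul, eval_finsetSum, eval_C, eval_pow, eval_X, smul_eq_mul]
      ring
  induction p using Polynomial.induction_on' with
  | add p q hp hq => simp only [map_add, eval_add, hp, hq, mul_add]
  | monomial n b =>
    simp only [← C_mul_X_pow_eq_monomial, ← smul_eq_C_mul, map_smul, eval_smul, hX_pow, smul_eq_mul]
    ring

end Generator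

theorem Continuous.integrable_of_measure_compl_eq_zero {Ω E : Type*} [MeasurableSpace Ω]
    [TopologicalSpace Ω] [OpensMeasurableSpace Ω] [T2Space Ω] [NormedAddCommGroup E]
    {ν : Measure Ω} [IsFiniteMeasureOnCompacts ν] {K : Set Ω} (hK : IsCompact K) (hνK : ν Kᶜ = 0)
    {f : Ω → E} (hf : Continuous f) :
    Integrable f ν := by
  have hrestrict : ν.restrict K = ν :=
    Measure.restrict_eq_self_of_ae_mem (by simpa using measure_eq_zero_iff_ae_notMem.mp hνK)
  simpa [IntegrableOn, hrestrict] using hf.continuousOn.integrableOn_compact (μ := ν) hK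

noncomputable def integralEval (ν : Measure ℝ) (hν : ∀ q : ℝ[X], Integrable (fun y => q.eval y) ν) :
    ℝ[X] →ₗ[ℝ] ℝ where
  toFun q := ∫ y, q.eval y ∂ν
  map_add' p q := by simp only [eval_add]; exact integral_add (hν p) (hν q)
  map_smul' b q := by simp only [eval_smul, smul_eq_mul, RingHom.id_apply]; exact integral_const_mul b _

@[simp]
theorem integralEval_apply (ν : Measure ℝ) (hν : ∀ q : ℝ[X], Integrable (fun y => q.eval y) ν)
    (q : ℝ[X]) : integralEval ν hν q = ∫ y, q.eval y ∂ν :=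
  rfl

theorem eq_of_forall_sub_sq_mul_eq {f g : ℝ → ℝ} (hf : Continuous f) (hg : Continuous g) (a : ℝ)
    (h : ∀ y, (y - a) ^ 2 * f y = (y - a) ^ 2 * g y) : f = g :=
  hf.ext_on (dense_compl_singleton a) hg fun y hy =>
    mul_left_cancel₀ (pow_ne_zero 2 (sub_ne_zero.mpr hy)) (h y)

theorem apply_X_mul_eq_of_commutator {A H : Module.End ℝ ℝ[X]} (hA : A * F - F * A = H) (q : ℝ[X]) :
    A (X * q) = X * A q + H q := by
  rw [← hA]
  simp [F]

theorem stmt12_general (t η σ : ℝ) (c : ℕ → ℝ)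
    (H : Module.End ℝ (Polynomial ℝ))
    (hH : ∀ n : ℕ, H (X ^ n) =
      C (1 / (1 + σ * t)) * (1 + C η * X + C σ * X ^ 2) *
        ∑ k ∈ Icc 1 n, C (c k) * X ^ (n - k))
    (ν : Measure ℝ) (hprob : IsProbabilityMeasure ν)
    (hsupp : ∃ K : Set ℝ, IsCompact K ∧ ν Kᶜ = 0)
    (hmom : ∀ k : ℕ, 1 ≤ k → ∫ y : ℝ, y ^ (k - 1) ∂ν = c k)
    (A : Module.End ℝ (Polynomial ℝ))
    (hA1 : A 1 = 0) (hA : A * F - F * A = H) :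
    ∀ (p : Polynomial ℝ) (r : MvPolynomial (Fin 2) ℝ),
      (∀ x y : ℝ, p.eval y - p.eval x - (y - x) * (derivative p).eval x =
        (y - x) ^ 2 * MvPolynomial.eval ![x, y] r) →
      ∀ x : ℝ, (A p).eval x =
        ((1 + η * x + σ * x ^ 2) / (1 + σ * t)) *
          ∫ y : ℝ, MvPolynomial.eval ![x, y] r ∂ν := by
  intro p r hr x
  obtain ⟨K, hK, hνK⟩ := hsupp
  have hint (q : ℝ[X]) : Integrable (fun y => q.eval y) ν :=
    q.continuous.integrable_of_measure_compl_eq_zero hK hνK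
  have hr' : (fun y => MvPolynomial.eval ![x, y] r) = fun y => (divDiff x (divDiff x p)).eval y :=
    eq_of_forall_sub_sq_mul_eq ((MvPolynomial.continuous_eval r).comp (by fun_prop))
      (divDiff x (divDiff x p)).continuous x fun y => by
        rw [← hr, eval_sub_eval_sub_mul_derivative]
  have hmain := eval_apply_eq_mul_apply_divDiff_divDiff (L := integralEval ν hint) hA1
    (apply_X_mul_eq_of_commutator hA) (fun n => by rw [hH, mul_assoc])
    (fun j => by simpa using hmom (j + 1) (by omega)) x p
  rw [hmain, hr']
  simp only [integralEval_apply, eval_mul, eval_C, eval_add, eval_one, eval_X, eval_pow]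
  ring

/-- Integral representation of the generator `A_t`: if `ν` is a compactly supported
probability measure with moments `∫ y^{k−1} dν = c_k`, and `A_t` is the unique operator
with `A_t 1 = 0` and `A_t∘F − F∘A_t = H_t`, then for every polynomial `p` and real `x`,
`A_t(p)(x) = ((1+ηx+σx²)/(1+σt))·∫ r_p(x,y) dν(y)`, where `r_p` is the polynomial with
`p(y) − p(x) − (y−x)·p′(x) = (y−x)²·r_p(x,y)`. -/
theorem stmt12 (t η θ σ τ : ℝ) (ht : 0 < t) (hσ : 0 ≤ σ) (hτ : 0 ≤ τ)
    (hστ : σ * τ ≠ 1) (c : ℕ → ℝ) (hc1 : c 1 = 1)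
    (hc : ∀ k : ℕ, 1 ≤ k →
      (1 + σ * t) * c (k + 1) =
        (θ - η * t) * c k +
          (t + τ) * ((∑ j ∈ Ico 1 k, c j * c (k - j)) +
            η * ∑ j ∈ range k, c (j + 1) * c (k - j) +
            σ * ∑ j ∈ range k, c (j + 2) * c (k - j)))
    (H : Module.End ℝ (Polynomial ℝ))
    (hH : ∀ n : ℕ, H (X ^ n) =
      C (1 / (1 + σ * t)) * (1 + C η * X + C σ * X ^ 2) *
        ∑ k ∈ Icc 1 n, C (c k) * X ^ (n - k))
    (ν : Measure ℝ) (hprob : IsProbabilityMeasure ν)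
    (hsupp : ∃ K : Set ℝ, IsCompact K ∧ ν Kᶜ = 0)
    (hmom : ∀ k : ℕ, 1 ≤ k → ∫ y : ℝ, y ^ (k - 1) ∂ν = c k)
    (A : Module.End ℝ (Polynomial ℝ))
    (hA1 : A 1 = 0) (hA : A * F - F * A = H) :
    ∀ (p : Polynomial ℝ) (r : MvPolynomial (Fin 2) ℝ),
      (∀ x y : ℝ, p.eval y - p.eval x - (y - x) * (derivative p).eval x =
        (y - x) ^ 2 * MvPolynomial.eval ![x, y] r) →
      ∀ x : ℝ, (A p).eval x =
        ((1 + η * x + σ * x ^ 2) / (1 + σ * t)) *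
          ∫ y : ℝ, MvPolynomial.eval ![x, y] r ∂ν :=
  stmt12_general t η σ c H hH ν hprob hsupp hmom A hA1 hA
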